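/- With unit activation costs, the price of anarchy of the coordination mechanism is at most 2: for any Nash equilibrium (s, ξ) and any optimal assignment s*, the total cost of s is at most twice the number of slots occupied in s*. -/

import Mathlib

/-- Number of jobs declaring slot `t`. -/
def load {n : ℕ} (s : Fin n → ℤ) (t : ℤ) : ℕ :=
  (Finset.univ.filter fun j => s j = t).card

/-- Total declared payment on slot `t`. -/
def pay {n : ℕ} (s : Fin n → ℤ) (ξ : Fin n → ℝ) (t : ℤ) : ℝ :=
  ∑ j ∈ Finset.univ.filter (fun j => s j = t), ξ j

/-- Unit activation cost: `c 0 = 0` and `c l = 1` for `l ≥ 1`. -/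
def unitCost (l : ℕ) : ℝ := if l = 0 then 0 else 1

/-- Total cost of an assignment with unit activation costs: the number of
occupied slots. -/
def occupied {n : ℕ} (s : Fin n → ℤ) : ℕ := (Finset.univ.image s).card

/-!
In an equilibrium every occupied slot collects payments summing to exactly one, so the cost of
`s` equals the total payment. Group the jobs by their slot in `s*`. If that slot is
open in `s`, every job of the group could move there, so only the jobs already on it pay, at most
one in total. Otherwise the jobs of the group above it can all move to the lowest occupied slot
among them, and those below to the highest one; this bounds each side by one. Hence every slot of
`s*` carries at most two units of payment.
-/

open Finset

/-- `max 0 (c - p)` is what a job has to pay to be admitted on a slot of cost `c` on which the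
other jobs already pay `p`. -/
structure IsEquilibrium {n : ℕ} (r e s : Fin n → ℤ) (ξ : Fin n → ℝ) : Prop where
  nonneg : ∀ j, 0 ≤ ξ j
  unitCost_le_pay : ∀ j, unitCost (load s (s j)) ≤ pay s ξ (s j)
  no_move : ∀ j, ∀ t ∈ Icc (r j) (e j), t ≠ s j →
    ξ j ≤ max 0 (unitCost (load s t + 1) - pay s ξ t)
  no_overpay : ∀ j, ξ j ≤ max 0 (unitCost (load s (s j)) - (pay s ξ (s j) - ξ j))

lemma unitCost_le_one (l : ℕ) : unitCost l ≤ 1 := by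
  unfold unitCost; split_ifs <;> norm_num

lemma unitCost_of_ne_zero {l : ℕ} (hl : l ≠ 0) : unitCost l = 1 := if_neg hl

section Payments

variable {n : ℕ} (s : Fin n → ℤ) (ξ : Fin n → ℝ)

lemma load_self_ne_zero (j : Fin n) : load s (s j) ≠ 0 :=
  card_ne_zero.mpr ⟨j, by simp⟩

lemma sum_eq_sum_pay : ∑ j, ξ j = ∑ t ∈ univ.image s, pay s ξ t :=
  (sum_fiberwise_of_maps_to (fun j _ => mem_image_of_mem s (mem_univ j)) ξ).symm

lemma mul_occupied_le_sum {a : ℝ} (h : ∀ j, a ≤ pay s ξ (s j)) :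
    a * occupied s ≤ ∑ j, ξ j := by
  rw [sum_eq_sum_pay, occupied, mul_comm, ← nsmul_eq_mul, ← sum_const]
  refine sum_le_sum fun t ht => ?_
  obtain ⟨j, -, rfl⟩ := mem_image.mp ht
  exact h j

lemma sum_le_mul_occupied {b : ℝ} (h : ∀ t, pay s ξ t ≤ b) :
    ∑ j, ξ j ≤ b * occupied s := by
  rw [sum_eq_sum_pay, occupied, mul_comm, ← nsmul_eq_mul, ← sum_const]
  exact sum_le_sum fun t _ => h t

lemma pay_le_one
    (hnec : ∀ j, ξ j ≤ max 0 (unitCost (load s (s j)) - (pay s ξ (s j) - ξ j))) (t : ℤ) :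
    pay s ξ t ≤ 1 := by
  by_contra! ht
  obtain ⟨j, hj, hξj⟩ : ∃ j ∈ univ.filter (s · = t), (0 : ℝ) < ξ j :=
    exists_lt_of_sum_lt (by rw [sum_const_zero]; exact one_pos.trans ht)
  obtain rfl := (mem_filter.mp hj).2
  -- a job paying a positive amount on an overpaid slot would rather pay less
  rcases le_max_iff.mp (hnec j) with h | h
  · linarith
  · linarith [unitCost_le_one (load s (s j))]

end Payments

namespace IsEquilibrium

variable {n : ℕ} {r e s : Fin n → ℤ} {ξ : Fin n → ℝ}

lemma one_le_pay (hs : IsEquilibrium r e s ξ) (j : Fin n) : 1 ≤ pay s ξ (s j) :=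
  unitCost_of_ne_zero (load_self_ne_zero s j) ▸ hs.unitCost_le_pay j

lemma pay_self_eq_one (hs : IsEquilibrium r e s ξ) (j : Fin n) : pay s ξ (s j) = 1 :=
  le_antisymm (pay_le_one s ξ hs.no_overpay _) (hs.one_le_pay j)

/-- Joining the slot `s i`, which is already fully paid, would cost job `j` nothing. -/
lemma eq_zero_of_mem_window (hs : IsEquilibrium r e s ξ) (j i : Fin n)
    (hi : s i ∈ Icc (r j) (e j)) (hji : s j ≠ s i) : ξ j = 0 := by
  have h := hs.no_move j (s i) hi hji.symm
  rw [unitCost_of_ne_zero (Nat.succ_ne_zero _), hs.pay_self_eq_one i, sub_self, max_self] at h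
  exact le_antisymm h (hs.nonneg j)

lemma sum_le_one_of_mem_window (hs : IsEquilibrium r e s ξ) (i : Fin n) (F : Finset (Fin n))
    (hF : ∀ j ∈ F, s i ∈ Icc (r j) (e j)) : ∑ j ∈ F, ξ j ≤ 1 := by
  calc ∑ j ∈ F, ξ j = ∑ j ∈ F.filter (s · = s i), ξ j :=
        (sum_filter_of_ne fun j hj hξj => by_contra fun hji =>
          hξj (hs.eq_zero_of_mem_window j i (hF j hj) hji)).symm
    _ ≤ pay s ξ (s i) :=
        sum_le_sum_of_subset_of_nonneg (filter_subset_filter _ (subset_univ F))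
          fun j _ _ => hs.nonneg j
    _ = 1 := hs.pay_self_eq_one i

lemma sum_le_one_of_forall_lt (hs : IsEquilibrium r e s ξ)
    (hwin : ∀ j, s j ∈ Icc (r j) (e j)) (t : ℤ) (F : Finset (Fin n))
    (hFt : ∀ j ∈ F, t ∈ Icc (r j) (e j)) (hlt : ∀ j ∈ F, t < s j) : ∑ j ∈ F, ξ j ≤ 1 := by
  rcases F.eq_empty_or_nonempty with rfl | hF
  · simp
  obtain ⟨i, hiF, hmin⟩ := exists_min_image F s hF
  exact hs.sum_le_one_of_mem_window i F fun j hj =>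
    uIcc_subset_Icc (hFt j hj) (hwin j) (mem_uIcc'.mpr (Or.inl ⟨(hlt i hiF).le, hmin j hj⟩))

lemma sum_le_one_of_forall_gt (hs : IsEquilibrium r e s ξ)
    (hwin : ∀ j, s j ∈ Icc (r j) (e j)) (t : ℤ) (F : Finset (Fin n))
    (hFt : ∀ j ∈ F, t ∈ Icc (r j) (e j)) (hgt : ∀ j ∈ F, s j < t) : ∑ j ∈ F, ξ j ≤ 1 := by
  rcases F.eq_empty_or_nonempty with rfl | hF
  · simp
  obtain ⟨i, hiF, hmax⟩ := exists_max_image F s hF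
  exact hs.sum_le_one_of_mem_window i F fun j hj =>
    uIcc_subset_Icc (hFt j hj) (hwin j) (mem_uIcc'.mpr (Or.inr ⟨hmax j hj, (hgt i hiF).le⟩))

lemma pay_le_two (hs : IsEquilibrium r e s ξ) (hwin : ∀ j, s j ∈ Icc (r j) (e j))
    {sstar : Fin n → ℤ} (hstarwin : ∀ j, sstar j ∈ Icc (r j) (e j)) (t : ℤ) :
    pay sstar ξ t ≤ 2 := by
  set G := univ.filter (sstar · = t)
  have hGt : ∀ j ∈ G, t ∈ Icc (r j) (e j) := fun j hj => (mem_filter.mp hj).2 ▸ hstarwin j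
  by_cases ht : ∃ i, s i = t
  · obtain ⟨i, rfl⟩ := ht
    exact (hs.sum_le_one_of_mem_window i G hGt).trans one_le_two
  push Not at ht
  have hup := hs.sum_le_one_of_forall_lt hwin t (G.filter (t < s ·))
    (fun j hj => hGt j (mem_filter.mp hj).1) (fun j hj => (mem_filter.mp hj).2)
  have hdown := hs.sum_le_one_of_forall_gt hwin t (G.filter fun j => ¬ t < s j)
    (fun j hj => hGt j (mem_filter.mp hj).1)
    (fun j hj => lt_of_le_of_ne (not_lt.mp (mem_filter.mp hj).2) (ht j))
  rw [pay, ← sum_filter_add_sum_filter_not G (t < s ·)]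
  linarith

end IsEquilibrium

theorem mechanism_poa_le_two_general {n : ℕ}
    (r e : Fin n → ℤ) (s : Fin n → ℤ) (ξ : Fin n → ℝ)
    (hwin : ∀ j, s j ∈ Finset.Icc (r j) (e j))
    (hξ : ∀ j, 0 ≤ ξ j)
    (hopen : ∀ j, unitCost (load s (s j)) ≤ pay s ξ (s j))
    (hdev : ∀ j, ∀ t ∈ Finset.Icc (r j) (e j), t ≠ s j →
      ξ j ≤ max 0 (unitCost (load s t + 1) - pay s ξ t))
    (hnec : ∀ j, ξ j ≤ max 0 (unitCost (load s (s j)) - (pay s ξ (s j) - ξ j)))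
    (sstar : Fin n → ℤ)
    (hstarwin : ∀ j, sstar j ∈ Finset.Icc (r j) (e j)) :
    occupied s ≤ 2 * occupied sstar := by
  have hs : IsEquilibrium r e s ξ := ⟨hξ, hopen, hdev, hnec⟩
  have h := (mul_occupied_le_sum s ξ hs.one_le_pay).trans
    (sum_le_mul_occupied sstar ξ (hs.pay_le_two hwin hstarwin))
  rw [one_mul] at h
  exact_mod_cast h

theorem mechanism_poa_le_two {n : ℕ}
    (r e : Fin n → ℤ) (s : Fin n → ℤ) (ξ : Fin n → ℝ)
    (hwin : ∀ j, s j ∈ Finset.Icc (r j) (e j))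
    (hξ : ∀ j, 0 ≤ ξ j)
    (hopen : ∀ j, unitCost (load s (s j)) ≤ pay s ξ (s j))
    (hdev : ∀ j, ∀ t ∈ Finset.Icc (r j) (e j), t ≠ s j →
      ξ j ≤ max 0 (unitCost (load s t + 1) - pay s ξ t))
    (hnec : ∀ j, ξ j ≤ max 0 (unitCost (load s (s j)) - (pay s ξ (s j) - ξ j)))
    (sstar : Fin n → ℤ)
    (hstarwin : ∀ j, sstar j ∈ Finset.Icc (r j) (e j))
    (hstaropt : ∀ s' : Fin n → ℤ, (∀ j, s' j ∈ Finset.Icc (r j) (e j)) →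
      occupied sstar ≤ occupied s') :
    occupied s ≤ 2 * occupied sstar :=
  mechanism_poa_le_two_general r e s ξ hwin hξ hopen hdev hnec sstar hstarwin
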